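/- Identity for the u-derivative of the normalized outgoing expansion: at points of the regular region 𝓡 where the structure equations hold, ∂_u [∂_v r / (1 − 2m/r)] = [4π r T_uu / ∂_u r] · [∂_v r / (1 − 2m/r)]; this is a pointwise consequence of the equation ∂_u(Ω⁻² ∂_u r) = −4π r Ω⁻² T_uu, the equation for ∂_u m, and the identity 1 − 2m/r = −4Ω⁻² ∂_u r ∂_v r. -/

import Mathlib

noncomputable section

open Set Filter Topology

namespace Dafermos

/-- The partial derivative of a function on the `(u,v)`-plane in the `u` (first) direction. -/
def pdu (f : ℝ × ℝ → ℝ) (p : ℝ × ℝ) : ℝ := fderiv ℝ f p (1, 0)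

/-- The partial derivative of a function on the `(u,v)`-plane in the `v` (second) direction. -/
def pdv (f : ℝ × ℝ → ℝ) (p : ℝ × ℝ) : ℝ := fderiv ℝ f p (0, 1)

/-- The Hawking mass `m = (r/2)(1 + 4 Ω⁻² ∂_u r ∂_v r)`. -/
def hawking (r Ω : ℝ × ℝ → ℝ) (p : ℝ × ℝ) : ℝ :=
  r p / 2 * (1 + 4 * (pdu r p * pdv r p) / Ω p ^ 2)


/-- Identity for the `u`-derivative of the normalized outgoing
expansion: at points of the regular region `𝓡` where the structure equations hold,
`∂_u [∂_v r / (1 − 2m/r)] = [4π r T_uu / ∂_u r] · [∂_v r / (1 − 2m/r)]`. -/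
theorem du_normalized_outgoing_expansion
    (r Ω Tuu Tuv Tvv : ℝ × ℝ → ℝ) (U : Set (ℝ × ℝ)) (hU : IsOpen U) (p : ℝ × ℝ)
    (hp : p ∈ U)
    (hrpos : ∀ q ∈ U, 0 < r q) (hΩpos : ∀ q ∈ U, 0 < Ω q)
    (hrC1 : ContDiffOn ℝ 1 r U) (hΩC1 : ContDiffOn ℝ 1 Ω U)
    (hdiff1 : DifferentiableAt ℝ (fun q => pdu r q / Ω q ^ 2) p)
    (hdiffm : DifferentiableAt ℝ (hawking r Ω) p)
    (hdiffN : DifferentiableAt ℝ (fun q => pdv r q / (1 - 2 * hawking r Ω q / r q)) p)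
    (heq_uu : ∀ q ∈ U,
      pdu (fun q' => pdu r q' / Ω q' ^ 2) q = -(4 * Real.pi * r q * Tuu q / Ω q ^ 2))
    (heq_mu : ∀ q ∈ U,
      pdu (hawking r Ω) q
        = 8 * Real.pi * r q ^ 2 / Ω q ^ 2 * (Tuv q * pdu r q - Tuu q * pdv r q))
    (hreg : ∀ q ∈ U, 0 < pdv r q ∧ pdu r q < 0) :
    pdu (fun q => pdv r q / (1 - 2 * hawking r Ω q / r q)) p
      = (4 * Real.pi * r p * Tuu p / pdu r p)
          * (pdv r p / (1 - 2 * hawking r Ω p / r p)) := by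
  -- key algebraic identity: 1 - 2m/r = -4 ∂_u r ∂_v r / Ω² on U
  have hkey : ∀ q ∈ U, 1 - 2 * hawking r Ω q / r q = -(4 * (pdu r q * pdv r q) / Ω q ^ 2) := by
    intro q hq
    have hr := (hrpos q hq).ne'
    unfold hawking
    field_simp
    ring
  -- hence the normalized expansion equals -(1/4) * (∂_u r / Ω²)⁻¹ on U
  have hfun : ∀ q ∈ U,
      pdv r q / (1 - 2 * hawking r Ω q / r q) = -(1/4) * (pdu r q / Ω q ^ 2)⁻¹ := by
    intro q hq
    have hΩ := (hΩpos q hq).ne'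
    have hv := (hreg q hq).1.ne'
    have hu := (hreg q hq).2.ne
    rw [hkey q hq]
    field_simp
  have hmem : U ∈ 𝓝 p := hU.mem_nhds hp
  have hEv : (fun q => pdv r q / (1 - 2 * hawking r Ω q / r q))
      =ᶠ[𝓝 p] (fun q => -(1/4) * (pdu r q / Ω q ^ 2)⁻¹) :=
    Filter.eventuallyEq_of_mem hmem hfun
  have hΩp := (hΩpos p hp).ne'
  have hup := (hreg p hp).2.ne
  have hgne : pdu r p / Ω p ^ 2 ≠ 0 := div_ne_zero hup (pow_ne_zero 2 hΩp)
  -- derivative of the right-hand representative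
  have hg : HasFDerivAt (fun q => pdu r q / Ω q ^ 2)
      (fderiv ℝ (fun q => pdu r q / Ω q ^ 2) p) p := hdiff1.hasFDerivAt
  have hinv := (hasDerivAt_inv hgne).comp_hasFDerivAt p hg
  have hmul := hinv.const_mul (-(1/4 : ℝ))
  have h1 : pdu (fun q => pdv r q / (1 - 2 * hawking r Ω q / r q)) p
      = pdu (fun q => -(1/4) * (pdu r q / Ω q ^ 2)⁻¹) p := by
    unfold pdu
    rw [hEv.fderiv_eq]
    rfl
  rw [h1]
  have hmul' : HasFDerivAt (fun q => -(1/4 : ℝ) * (pdu r q / Ω q ^ 2)⁻¹)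
      (-(1/4 : ℝ) • -((pdu r p / Ω p ^ 2) ^ 2)⁻¹ •
        fderiv ℝ (fun q => pdu r q / Ω q ^ 2) p) p := hmul
  have h2 : pdu (fun q => -(1/4) * (pdu r q / Ω q ^ 2)⁻¹) p
      = -(1/4 : ℝ) * (-((pdu r p / Ω p ^ 2) ^ 2)⁻¹ * pdu (fun q => pdu r q / Ω q ^ 2) p) := by
    show fderiv ℝ (fun q => -(1/4 : ℝ) * (pdu r q / Ω q ^ 2)⁻¹) p (1, 0) = _
    rw [hmul'.fderiv]
    simp [pdu, smul_eq_mul]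
  rw [h2, heq_uu p hp, hfun p hp]
  field_simp

end Dafermos
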